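/- Under the hypotheses ‖ΨΣ♯ − B♯‖_F ≤ ε, Σ♯ row-wise K-sparse, and Ψ satisfying RIP of order K with constant δ_K < 1, the projection of the error onto the orthogonal complement of the top-R right singular subspace U♯ of B♯ satisfies ‖Σ♯(I − U♯ U♯ᵀ)‖_F ≤ 2ε/√(1−δ_K). -/
import Mathlib


open Matrix

noncomputable def frob {m n : Type*} [Fintype m] [Fintype n]
    (A : Matrix m n ℝ) : ℝ := Real.sqrt (∑ i, ∑ j, (A i j) ^ 2)

noncomputable def frobSq {m n : Type*} [Fintype m] [Fintype n]
    (A : Matrix m n ℝ) : ℝ := ∑ i, ∑ j, (A i j) ^ 2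

section aux
variable {m n : Type*} [Fintype m] [Fintype n]

lemma frobSq_nonneg (A : Matrix m n ℝ) : 0 ≤ frobSq A :=
  Finset.sum_nonneg fun _ _ => Finset.sum_nonneg fun _ _ => sq_nonneg _

lemma frob_eq (A : Matrix m n ℝ) : frob A = Real.sqrt (frobSq A) := rfl

lemma frob_nonneg (A : Matrix m n ℝ) : 0 ≤ frob A := Real.sqrt_nonneg _

lemma frob_sq (A : Matrix m n ℝ) : frob A ^ 2 = frobSq A :=
  Real.sq_sqrt (frobSq_nonneg A)

lemma frobSq_eq_trace (A : Matrix m n ℝ) : frobSq A = (Aᵀ * A).trace := by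
  unfold frobSq
  rw [Matrix.trace, Finset.sum_comm]
  simp [Matrix.diag, Matrix.mul_apply, sq]

lemma sqrt_sum_sq_add_le {ι : Type*} [Fintype ι] (x y : ι → ℝ) :
    Real.sqrt (∑ p, (x p + y p)^2) ≤ Real.sqrt (∑ p, x p ^2) + Real.sqrt (∑ p, y p^2) := by
  have := norm_add_le ((WithLp.equiv 2 (ι → ℝ)).symm x) ((WithLp.equiv 2 (ι → ℝ)).symm y)
  simpa [EuclideanSpace.norm_eq, Real.norm_eq_abs, sq_abs] using this

lemma frob_add_le (A B : Matrix m n ℝ) : frob (A + B) ≤ frob A + frob B := by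
  have := sqrt_sum_sq_add_le (fun p : m × n => A p.1 p.2) (fun p : m × n => B p.1 p.2)
  simpa [frob, Fintype.sum_prod_type, Matrix.add_apply] using this

lemma frob_neg (A : Matrix m n ℝ) : frob (-A) = frob A := by
  simp [frob]

/-- contraction by an orthogonal coprojection on the right -/
lemma frobSq_mul_one_sub_proj_le [DecidableEq n] (X : Matrix m n ℝ) (P : Matrix n n ℝ)
    (hP : Pᵀ = P) (hPP : P * P = P) : frobSq (X * (1 - P)) ≤ frobSq X := by
  have hQQ : (1 - P) * (1 - P) = 1 - P := by
    rw [Matrix.sub_mul, Matrix.mul_sub, Matrix.mul_sub, hPP]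
    simp
  have h1 : frobSq (X * (1 - P)) = (Xᵀ * X).trace - (Xᵀ * X * P).trace := by
    rw [frobSq_eq_trace]
    have e : (X * (1 - P))ᵀ * (X * (1 - P)) = (1 - P) * (Xᵀ * X * (1 - P)) := by
      rw [Matrix.transpose_mul, Matrix.transpose_sub, Matrix.transpose_one, hP]
      simp [Matrix.mul_assoc]
    rw [e, Matrix.trace_mul_comm, Matrix.mul_assoc, hQQ, Matrix.mul_sub,
      Matrix.mul_one, Matrix.trace_sub]
  have h2 : (Xᵀ * X * P).trace = frobSq (X * P) := by
    rw [frobSq_eq_trace]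
    have e : (X * P)ᵀ * (X * P) = P * (Xᵀ * X * P) := by
      rw [Matrix.transpose_mul, hP]
      simp [Matrix.mul_assoc]
    rw [e, Matrix.trace_mul_comm P (Xᵀ * X * P), Matrix.mul_assoc (Xᵀ * X) P P, hPP]
  have h3 : 0 ≤ frobSq (X * P) := frobSq_nonneg _
  have h4 : frobSq X = (Xᵀ * X).trace := frobSq_eq_trace X
  linarith

end aux

/-- abstract key step -/
lemma key_step {M N K : ℕ} (Ψ : Matrix (Fin M) (Fin N) ℝ)
    (S : Matrix (Fin N) (Fin N) ℝ) (B : Matrix (Fin M) (Fin N) ℝ)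
    (P : Matrix (Fin N) (Fin N) ℝ) (δ ε : ℝ)
    (hδ1 : (0:ℝ) < 1 - δ) (hε : 0 ≤ ε)
    (hRIP : ∀ z : Fin N → ℝ, {i : Fin N | z i ≠ 0}.ncard ≤ K →
      (1 - δ) * (∑ i, z i ^ 2) ≤ (∑ i, (Ψ.mulVec z) i ^ 2))
    (hsparse : {i : Fin N | S i ≠ 0}.ncard ≤ K)
    (hP : Pᵀ = P) (hPP : P * P = P)
    (htri : frob (Ψ * S - B * P) ≤ 2 * ε) :
    frob (S * (1 - P)) ≤ 2 * ε / Real.sqrt (1 - δ) := by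
  have heq : Ψ * (S * (1 - P)) = (Ψ * S - B * P) * (1 - P) := by
    have hP0 : P * (1 - P) = 0 := by
      rw [Matrix.mul_sub, Matrix.mul_one, hPP, sub_self]
    rw [Matrix.sub_mul, Matrix.mul_assoc B P (1 - P), hP0, Matrix.mul_zero,
      sub_zero, Matrix.mul_assoc]
  have hcontr : frobSq (Ψ * (S * (1 - P))) ≤ frobSq (Ψ * S - B * P) := by
    rw [heq]
    exact frobSq_mul_one_sub_proj_le _ P hP hPP
  have hcol : ∀ j, {i : Fin N | (S * (1 - P)) i j ≠ 0}.ncard ≤ K := by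
    intro j
    refine le_trans (Set.ncard_le_ncard ?_ (Set.toFinite _)) hsparse
    intro i hi
    simp only [Set.mem_setOf_eq] at hi ⊢
    intro hSi
    apply hi
    have : ∀ k, S i k = 0 := fun k => congrFun hSi k
    simp [Matrix.mul_apply, this]
  have hrip : (1 - δ) * frobSq (S * (1 - P)) ≤ frobSq (Ψ * (S * (1 - P))) := by
    have e1 : frobSq (S * (1 - P)) = ∑ j : Fin N, ∑ i : Fin N, (S * (1 - P)) i j ^ 2 := by
      unfold frobSq; exact Finset.sum_comm
    have e2 : frobSq (Ψ * (S * (1 - P))) = ∑ j : Fin N, ∑ i : Fin M, ((Ψ * (S * (1 - P)) : Matrix (Fin M) (Fin N) ℝ)) i j ^ 2 := by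
      unfold frobSq; exact Finset.sum_comm
    rw [e1, e2, Finset.mul_sum]
    apply Finset.sum_le_sum
    intro j _
    have h := hRIP (fun i => (S * (1 - P)) i j) (hcol j)
    refine le_trans h (le_of_eq ?_)
    apply Finset.sum_congr rfl
    intro i _
    congr 1
  have hfs : frobSq (Ψ * S - B * P) ≤ (2 * ε)^2 := by
    rw [← frob_sq]
    have := frob_nonneg (Ψ * S - B * P)
    nlinarith
  have hZbound : frobSq (S * (1 - P)) ≤ (2 * ε / Real.sqrt (1 - δ))^2 := by
    have hs : Real.sqrt (1 - δ) ^ 2 = 1 - δ := Real.sq_sqrt hδ1.le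
    rw [div_pow, hs, le_div_iff₀ hδ1]
    calc frobSq (S * (1 - P)) * (1 - δ) = (1 - δ) * frobSq (S * (1 - P)) := by ring
      _ ≤ frobSq (Ψ * (S * (1 - P))) := hrip
      _ ≤ frobSq (Ψ * S - B * P) := hcontr
      _ ≤ (2 * ε)^2 := hfs
  have hpos : 0 ≤ 2 * ε / Real.sqrt (1 - δ) :=
    div_nonneg (by linarith) (Real.sqrt_nonneg _)
  calc frob (S * (1 - P)) = Real.sqrt (frobSq (S * (1 - P))) := frob_eq _
    _ ≤ Real.sqrt ((2 * ε / Real.sqrt (1 - δ))^2) := Real.sqrt_le_sqrt hZbound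
    _ = 2 * ε / Real.sqrt (1 - δ) := Real.sqrt_sq hpos


/-- Under `‖ΨΣ♯ − B♯‖_F ≤ ε`, `Σ♯` rank ≤ `R` and row-wise `K`-sparse, and `Ψ`
satisfying the RIP of order `K` with constant `δ < 1`, with `U♯` the orthonormal basis
of the top-`R` right singular subspace of `B♯` (so `B♯U♯U♯ᵀ` is the best rank-`R`
Frobenius approximation), we have `‖Σ♯(I − U♯U♯ᵀ)‖_F ≤ 2ε/√(1−δ)`. -/
theorem stmt7 {M N R K : ℕ} (Ψ : Matrix (Fin M) (Fin N) ℝ)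
    (S : Matrix (Fin N) (Fin N) ℝ) (B : Matrix (Fin M) (Fin N) ℝ)
    (U : Matrix (Fin N) (Fin R) ℝ) (δ ε : ℝ)
    (hδ0 : 0 ≤ δ) (hδ : δ < 1)
    (hRIP : ∀ z : Fin N → ℝ, {i : Fin N | z i ≠ 0}.ncard ≤ K →
      (1 - δ) * (∑ i, z i ^ 2) ≤ (∑ i, (Ψ.mulVec z) i ^ 2) ∧
      (∑ i, (Ψ.mulVec z) i ^ 2) ≤ (1 + δ) * (∑ i, z i ^ 2))
    (hrank : S.rank ≤ R)
    (hsparse : {i : Fin N | S i ≠ 0}.ncard ≤ K)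
    (herr : frob (Ψ * S - B) ≤ ε)
    (hortho : Uᵀ * U = 1)
    (hbest : ∀ C : Matrix (Fin M) (Fin N) ℝ, C.rank ≤ R →
      frob (B - B * U * Uᵀ) ≤ frob (B - C)) :
    frob (S * (1 - U * Uᵀ)) ≤ 2 * ε / Real.sqrt (1 - δ) := by
  have hδ1 : (0:ℝ) < 1 - δ := by linarith
  have hP : (U * Uᵀ)ᵀ = U * Uᵀ := by
    rw [Matrix.transpose_mul, Matrix.transpose_transpose]
  have hPP : (U * Uᵀ) * (U * Uᵀ) = U * Uᵀ := by
    rw [Matrix.mul_assoc, ← Matrix.mul_assoc Uᵀ U Uᵀ, hortho, Matrix.one_mul]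
  have hε : 0 ≤ ε := le_trans (frob_nonneg _) herr
  have hrankΨS : (Ψ * S).rank ≤ R := le_trans (Matrix.rank_mul_le_right Ψ S) hrank
  have hb : frob (B - B * (U * Uᵀ)) ≤ ε := by
    have h := hbest (Ψ * S) hrankΨS
    rw [Matrix.mul_assoc] at h
    refine le_trans h ?_
    rw [show B - Ψ * S = -(Ψ * S - B) from (neg_sub _ _).symm, frob_neg]
    exact herr
  have htri : frob (Ψ * S - B * (U * Uᵀ)) ≤ 2 * ε := by
    have h := frob_add_le (Ψ * S - B) (B - B * (U * Uᵀ))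
    rw [show (Ψ * S - B) + (B - B * (U * Uᵀ)) = Ψ * S - B * (U * Uᵀ) by abel] at h
    linarith
  exact key_step Ψ S B (U * Uᵀ) δ ε hδ1 hε (fun z hz => (hRIP z hz).1) hsparse hP hPP htri
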